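/- For every irrational real number θ there exist infinitely many pairs of integers (k₁, k₂) with k₂ > 0 such that |θ − k₁/k₂| ≤ 1/(√5·k₂²). -/

import Mathlib

/-! Let `pₙ/qₙ` be the convergents and `θₙ` the complete quotients of the continued fraction of
`θ`. Then `|θ - pₙ/qₙ| = 1 / (qₙ² λₙ)` with `λₙ = θₙ₊₁ + qₙ₋₁/qₙ`. Putting `x = θₙ₊₂` and
`y = qₙ/qₙ₊₁`, the recursions give `λₙ = x⁻¹ + y⁻¹` and `λₙ₊₁ = x + y`, and if both are `< √5`
then `y⁻¹ < φ`. Two consecutive such bounds contradict `qₙ₊₂/qₙ₊₁ = aₙ₊₂ + qₙ/qₙ₊₁ > 1 + φ⁻¹ = φ`,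
so `λₙ ≥ √5` for one of any three consecutive indices. -/

open Real goldenRatio

theorem Irrational.fract {x : ℝ} (hx : Irrational x) : Irrational (Int.fract x) := by
  rw [← Int.self_sub_floor]
  exact hx.sub_intCast _

theorem abs_sub_div_eq_one_div {θ t p q p' q' : ℝ} (hq : 0 < q) (hD : 0 < t * q + q')
    (hθ : θ * (t * q + q') = t * p + p') (hdet : |p * q' - p' * q| = 1) :
    |θ - p / q| = 1 / (q * (t * q + q')) := by
  rw [eq_div_of_mul_eq hD.ne' hθ, div_sub_div _ _ hD.ne' hq.ne', abs_div,
    abs_of_pos (mul_pos hD hq), mul_comm q,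
    show (t * p + p') * q - (t * q + q') * p = -(p * q' - p' * q) by ring, abs_neg, hdet]

theorem inv_lt_goldenRatio {x y : ℝ} (hx : 0 < x) (hy : 0 < y) (h : x + y < √5)
    (h' : x⁻¹ + y⁻¹ < √5) : y⁻¹ < φ := by
  have h5 : √5 ^ 2 = 5 := Real.sq_sqrt (by norm_num)
  have hprod : x * x⁻¹ < (√5 - y) * (√5 - y⁻¹) :=
    mul_lt_mul'' (by linarith) (by linarith) hx.le (inv_pos.2 hx).le
  rw [mul_inv_cancel₀ hx.ne'] at hprod
  have hyy : y * y⁻¹ = 1 := mul_inv_cancel₀ hy.ne'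
  -- `(√5 - y) * (√5 - y⁻¹) = 6 - √5 * (y + y⁻¹)`
  have hsum : y + y⁻¹ < √5 := by nlinarith
  have hfactor : (y⁻¹ - φ) * (y⁻¹ - φ + 1) = y⁻¹ * (y⁻¹ + y - √5) := by
    rw [← goldenRatio_sub_goldenConj, ← one_sub_goldenConj]
    linear_combination goldenRatio_sq - hyy
  by_contra! hge
  have h1 : 0 ≤ (y⁻¹ - φ) * (y⁻¹ - φ + 1) := mul_nonneg (by linarith) (by linarith)
  have h2 : y⁻¹ * (y⁻¹ + y - √5) < 0 := mul_neg_of_pos_of_neg (inv_pos.2 hy) (by linarith)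
  linarith

namespace Hurwitz

section Convergents

variable (a : ℕ → ℤ)

/-- Indices are shifted by one: `convNum a (n + 1) / convDen a (n + 1)` is the `n`-th convergent
of `[a 0; a 1, a 2, …]`, and index `0` holds the conventional `p₋₁ = 1`, `q₋₁ = 0`. -/
def convNum : ℕ → ℤ
  | 0 => 1
  | 1 => a 0
  | n + 2 => a (n + 1) * convNum (n + 1) + convNum n

def convDen : ℕ → ℤ
  | 0 => 0
  | 1 => 1
  | n + 2 => a (n + 1) * convDen (n + 1) + convDen n

theorem convNum_add_two (n : ℕ) :
    convNum a (n + 2) = a (n + 1) * convNum a (n + 1) + convNum a n := rfl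

theorem convDen_add_two (n : ℕ) :
    convDen a (n + 2) = a (n + 1) * convDen a (n + 1) + convDen a n := rfl

theorem convNum_succ_mul_convDen_sub (n : ℕ) :
    convNum a (n + 1) * convDen a n - convNum a n * convDen a (n + 1) = (-1) ^ (n + 1) := by
  induction n with
  | zero => simp [convNum, convDen]
  | succ n ih =>
    rw [convNum_add_two, convDen_add_two, pow_succ]
    linear_combination -ih

variable {a}

theorem convDen_succ_pos (ha : ∀ n, 0 < a (n + 1)) : ∀ n, 0 < convDen a (n + 1)
  | 0 => one_pos
  | 1 => by simpa [convDen] using ha 0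
  | n + 2 => by
    have := convDen_succ_pos ha n
    have := convDen_succ_pos ha (n + 1)
    have := ha (n + 1)
    rw [convDen_add_two]
    positivity

theorem convDen_nonneg (ha : ∀ n, 0 < a (n + 1)) : ∀ n, 0 ≤ convDen a n
  | 0 => le_rfl
  | n + 1 => (convDen_succ_pos ha n).le

theorem le_convDen_succ (ha : ∀ n, 0 < a (n + 1)) : ∀ n : ℕ, (n : ℤ) ≤ convDen a (n + 1)
  | 0 => (convDen_succ_pos ha 0).le
  | 1 => convDen_succ_pos ha 1
  | n + 2 => by
    have := le_convDen_succ ha (n + 1)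
    have := convDen_succ_pos ha n
    have := convDen_succ_pos ha (n + 1)
    have := ha (n + 1)
    rw [convDen_add_two]
    push_cast at *
    nlinarith

noncomputable def denRatio (a : ℕ → ℤ) (n : ℕ) : ℝ := convDen a n / convDen a (n + 1)

theorem denRatio_pos (ha : ∀ n, 0 < a (n + 1)) (n : ℕ) : 0 < denRatio a (n + 1) := by
  have := convDen_succ_pos ha n
  have := convDen_succ_pos ha (n + 1)
  unfold denRatio
  positivity

theorem inv_denRatio_succ (ha : ∀ n, 0 < a (n + 1)) (n : ℕ) :
    (denRatio a (n + 1))⁻¹ = a (n + 1) + denRatio a n := by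
  have := (convDen_succ_pos ha n).ne'
  simp only [denRatio, inv_div, convDen_add_two]
  push_cast
  field_simp

end Convergents

section CompleteQuotients

variable (θ : ℝ)

noncomputable def completeQuot : ℕ → ℝ
  | 0 => θ
  | n + 1 => (Int.fract (completeQuot n))⁻¹

theorem completeQuot_zero : completeQuot θ 0 = θ := rfl

noncomputable def partialQuot (n : ℕ) : ℤ := ⌊completeQuot θ n⌋

theorem completeQuot_eq_add_inv (n : ℕ) :
    completeQuot θ n = partialQuot θ n + (completeQuot θ (n + 1))⁻¹ := by
  rw [completeQuot, inv_inv, partialQuot, Int.floor_add_fract]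

variable {θ}

theorem irrational_completeQuot (hθ : Irrational θ) : ∀ n, Irrational (completeQuot θ n)
  | 0 => hθ
  | n + 1 => (irrational_completeQuot hθ n).fract.inv

theorem fract_completeQuot_pos (hθ : Irrational θ) (n : ℕ) :
    0 < Int.fract (completeQuot θ n) :=
  (Int.fract_nonneg _).lt_of_ne' (irrational_completeQuot hθ n).fract.ne_zero

theorem one_lt_completeQuot_succ (hθ : Irrational θ) (n : ℕ) : 1 < completeQuot θ (n + 1) :=
  one_lt_inv_iff₀.mpr ⟨fract_completeQuot_pos hθ n, Int.fract_lt_one _⟩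

theorem partialQuot_succ_pos (hθ : Irrational θ) (n : ℕ) : 0 < partialQuot θ (n + 1) :=
  Int.floor_pos.mpr (one_lt_completeQuot_succ hθ n).le

theorem self_mul_completeQuot_convDen_add (hθ : Irrational θ) (n : ℕ) :
    θ * (completeQuot θ (n + 1) * convDen (partialQuot θ) (n + 1) + convDen (partialQuot θ) n)
      = completeQuot θ (n + 1) * convNum (partialQuot θ) (n + 1)
        + convNum (partialQuot θ) n := by
  induction n with
  | zero =>
    have ht := (zero_lt_one.trans (one_lt_completeQuot_succ hθ 0)).ne'
    have hrec := completeQuot_eq_add_inv θ 0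
    rw [completeQuot_zero] at hrec
    simp only [convNum, convDen]
    push_cast
    linear_combination completeQuot θ 1 * hrec + mul_inv_cancel₀ ht
  | succ n ih =>
    have ht := (zero_lt_one.trans (one_lt_completeQuot_succ hθ (n + 1))).ne'
    rw [completeQuot_eq_add_inv θ (n + 1)] at ih
    rw [convNum_add_two, convDen_add_two]
    push_cast
    field_simp at ih ⊢
    linear_combination ih

theorem abs_sub_convergent_le (hθ : Irrational θ) {n : ℕ}
    (h : √5 ≤ completeQuot θ (n + 1) + denRatio (partialQuot θ) n) :
    |θ - convNum (partialQuot θ) (n + 1) / convDen (partialQuot θ) (n + 1)|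
      ≤ 1 / (√5 * (convDen (partialQuot θ) (n + 1) : ℝ) ^ 2) := by
  have ha := partialQuot_succ_pos hθ
  have hq : (0 : ℝ) < convDen (partialQuot θ) (n + 1) := by exact_mod_cast convDen_succ_pos ha n
  have hq' : (0 : ℝ) ≤ convDen (partialQuot θ) n := by exact_mod_cast convDen_nonneg ha n
  have ht := zero_lt_one.trans (one_lt_completeQuot_succ hθ n)
  have hdet := congrArg (fun z : ℤ => |(z : ℝ)|) (convNum_succ_mul_convDen_sub (partialQuot θ) n)
  push_cast at hdet
  rw [abs_sub_div_eq_one_div hq (by positivity) (self_mul_completeQuot_convDen_add hθ n)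
    (by simpa using hdet)]
  refine one_div_le_one_div_of_le (by positivity) ?_
  calc √5 * (convDen (partialQuot θ) (n + 1) : ℝ) ^ 2
      ≤ (completeQuot θ (n + 1) + denRatio (partialQuot θ) n)
          * (convDen (partialQuot θ) (n + 1) : ℝ) ^ 2 := by gcongr
    _ = _ := by
      unfold denRatio
      field_simp

theorem exists_sqrt_five_le (hθ : Irrational θ) (n : ℕ) :
    ∃ m, n ≤ m ∧ √5 ≤ completeQuot θ (m + 1) + denRatio (partialQuot θ) m := by
  have ha := partialQuot_succ_pos hθ
  by_contra! hbad
  have hinv : ∀ m, n ≤ m → (denRatio (partialQuot θ) (m + 1))⁻¹ < φ := by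
    intro m hm
    refine inv_lt_goldenRatio (zero_lt_one.trans (one_lt_completeQuot_succ hθ (m + 1)))
      (denRatio_pos ha m) (hbad (m + 1) (by omega)) ?_
    have := hbad m hm
    rw [completeQuot_eq_add_inv θ (m + 1)] at this
    rw [inv_denRatio_succ ha]
    linarith
  have hlower := inv_lt_of_inv_lt₀ (denRatio_pos ha n) (hinv n le_rfl)
  have hupper := hinv (n + 1) (by omega)
  rw [inv_denRatio_succ ha] at hupper
  have hpartial : (1 : ℝ) ≤ partialQuot θ (n + 2) := by exact_mod_cast ha (n + 1)
  linarith [inv_goldenRatio, goldenRatio_add_goldenConj]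

end CompleteQuotients

end Hurwitz

theorem stmt_13 (θ : ℝ) (hθ : Irrational θ) :
    {p : ℤ × ℤ | 0 < p.2 ∧ |θ - (p.1 : ℝ) / p.2| ≤ 1 / (Real.sqrt 5 * (p.2 : ℝ) ^ 2)}.Infinite := by
  refine Set.Infinite.of_image Prod.snd (Set.infinite_of_forall_exists_gt fun b => ?_)
  obtain ⟨m, hm, hgood⟩ := Hurwitz.exists_sqrt_five_le hθ (b.toNat + 1)
  have ha := Hurwitz.partialQuot_succ_pos hθ
  refine ⟨_, ⟨(_, _), ⟨Hurwitz.convDen_succ_pos ha m, Hurwitz.abs_sub_convergent_le hθ hgood⟩, rfl⟩,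
    ?_⟩
  have := Hurwitz.le_convDen_succ ha m
  omega
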